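/- arXiv:2007.12973 — 2 statements merged into one kernel-verified Lean document; each statement's English description precedes it below -/
import Mathlib

section
/- Under assumptions (A1)-(A6), the local average treatment effect E(Y_t^{A=1} − Y_t^{A=0} | A^{Z=1} > A^{Z=0}) equals the ratio {E[E(Y_t | X, Z=1)] − E[E(Y_t | X, Z=0)]} / {E[E(A | X, Z=1)] − E[E(A | X, Z=0)]}, provided the denominator is nonzero. -/
open Finset
open scoped Classical

noncomputable def Pr {Ω : Type*} [Fintype Ω] (p : Ω → ℝ) (A : Ω → Prop) : ℝ :=
  ∑ ω, if A ω then p ω else 0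

noncomputable def Ex {Ω : Type*} [Fintype Ω] (p : Ω → ℝ) (f : Ω → ℝ) : ℝ :=
  ∑ ω, p ω * f ω

noncomputable def cexp {Ω : Type*} [Fintype Ω] (p : Ω → ℝ) (f : Ω → ℝ) (A : Ω → Prop) : ℝ :=
  (∑ ω, if A ω then p ω * f ω else 0) / Pr p A

/-!
Stratify by `X`. Within a stratum `X = x`, ignorability makes the instrument independent of the
potential-outcome vector `U = (A⁰, A¹, Y⁰, Y¹)`, so by positivity the average of any function of
`U` over `{Z = z, X = x}` equals its average over `{X = x}`. By consistency and the exclusion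
restriction, `Y` and `A` are functions of `U` on each arm `Z = z`, so the standardized contrasts
become `E[Y^{A¹} - Y^{A⁰}]` and `E[A¹ - A⁰]`. Under monotonicity `A¹ - A⁰` is the indicator of
the compliers `A⁰ < A¹`, and `Y^{A¹} - Y^{A⁰}` vanishes off them; the ratio is therefore
`E[(Y¹ - Y⁰) 1{A⁰ < A¹}] / P(A⁰ < A¹)`.
-/

noncomputable def pexp {Ω : Type*} [Fintype Ω] (p : Ω → ℝ) (f : Ω → ℝ) (A : Ω → Prop) : ℝ :=
  ∑ ω, if A ω then p ω * f ω else 0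

section FiniteExpectation

variable {Ω : Type*} [Fintype Ω] (p : Ω → ℝ)

theorem cexp_eq_pexp_div (f : Ω → ℝ) (A : Ω → Prop) : cexp p f A = pexp p f A / Pr p A := rfl

theorem Pr_congr {A B : Ω → Prop} (h : ∀ ω, A ω ↔ B ω) : Pr p A = Pr p B := by
  simp only [Pr, h]

theorem pexp_congr {f g : Ω → ℝ} {A B : Ω → Prop} (hAB : ∀ ω, A ω ↔ B ω)
    (hfg : ∀ ω, B ω → f ω = g ω) : pexp p f A = pexp p g B := by
  refine sum_congr rfl fun ω _ => ?_
  by_cases h : B ω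
  · simp [(hAB ω).mpr h, h, hfg ω h]
  · simp [mt (hAB ω).mp h, h]

theorem pexp_sub (f g : Ω → ℝ) (A : Ω → Prop) :
    pexp p f A - pexp p g A = pexp p (fun ω => f ω - g ω) A := by
  rw [pexp, pexp, pexp, ← sum_sub_distrib]
  exact sum_congr rfl fun ω _ => by split_ifs <;> ring

theorem sum_pexp_fiber {𝕏 : Type*} [Fintype 𝕏] (f : Ω → ℝ) (X : Ω → 𝕏) :
    ∑ x, pexp p f (fun ω => X ω = x) = Ex p f := by
  simp only [pexp, Ex]
  rw [sum_comm]
  exact sum_congr rfl fun ω _ => by simp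

theorem pexp_one (A : Ω → Prop) : pexp p (fun _ => 1) A = Pr p A := by
  simp only [pexp, Pr, mul_one]

theorem Ex_eq_pexp_of_ae {f g : Ω → ℝ} {A : Ω → Prop}
    (h : ∀ ω, p ω ≠ 0 → f ω = if A ω then g ω else 0) : Ex p f = pexp p g A := by
  unfold Ex pexp
  refine sum_congr rfl fun ω _ => ?_
  by_cases hp : p ω = 0
  · simp [hp]
  · simp [h ω hp, mul_ite]

theorem pexp_comp_eq_sum_image {β : Type*} (U : Ω → β) (g : β → ℝ) (B : Ω → Prop) :
    pexp p (fun ω => g (U ω)) B = ∑ u ∈ univ.image U, g u * Pr p (fun ω => B ω ∧ U ω = u) := by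
  rw [pexp, ← sum_fiberwise_of_maps_to (g := U) (t := univ.image U) (by simp)]
  refine sum_congr rfl fun u _ => ?_
  rw [Pr, mul_sum, sum_filter]
  refine sum_congr rfl fun ω _ => ?_
  by_cases hU : U ω = u
  · by_cases hB : B ω <;> simp [hU, hB, mul_comm]
  · simp [hU]

variable {p}

theorem Pr_nonneg (hp0 : ∀ ω, 0 ≤ p ω) (A : Ω → Prop) : 0 ≤ Pr p A :=
  sum_nonneg fun ω _ => by split_ifs <;> simp [hp0 ω]

theorem eq_zero_of_Pr_eq_zero (hp0 : ∀ ω, 0 ≤ p ω) {A : Ω → Prop} (h : Pr p A = 0) {ω : Ω}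
    (hω : A ω) : p ω = 0 := by
  have := (sum_eq_zero_iff_of_nonneg fun i _ => by split_ifs <;> simp [hp0 i]).mp h ω (mem_univ ω)
  simpa [hω] using this

theorem pexp_eq_zero_of_Pr_eq_zero (hp0 : ∀ ω, 0 ≤ p ω) (f : Ω → ℝ) {A : Ω → Prop}
    (h : Pr p A = 0) : pexp p f A = 0 :=
  sum_eq_zero fun ω _ => by
    split_ifs with hω
    · rw [eq_zero_of_Pr_eq_zero hp0 h hω, zero_mul]
    · rfl

theorem ae_of_Pr_eq_one (hp0 : ∀ ω, 0 ≤ p ω) (hp1 : ∑ ω, p ω = 1) {A : Ω → Prop}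
    (h : Pr p A = 1) {ω : Ω} (hω : p ω ≠ 0) : A ω := by
  by_contra hA
  have hsplit : Pr p A + Pr p (fun ω => ¬ A ω) = ∑ ω, p ω := by
    rw [Pr, Pr, ← sum_add_distrib]
    exact sum_congr rfl fun ω _ => by split_ifs <;> simp_all
  exact hω (eq_zero_of_Pr_eq_zero hp0 (by linarith) hA)

end FiniteExpectation

section Independence

variable {Ω β : Type*} [Fintype Ω] {p : Ω → ℝ} (U : Ω → β) (g : β → ℝ) {B C : Ω → Prop}

theorem Pr_mul_pexp_comp_comm
    (hind : ∀ u, Pr p (fun ω => C ω ∧ U ω = u) * Pr p B = Pr p C * Pr p (fun ω => B ω ∧ U ω = u)) :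
    Pr p C * pexp p (fun ω => g (U ω)) B = Pr p B * pexp p (fun ω => g (U ω)) C := by
  rw [pexp_comp_eq_sum_image, pexp_comp_eq_sum_image, mul_sum, mul_sum]
  refine sum_congr rfl fun u _ => ?_
  linear_combination -g u * hind u

theorem mul_cexp_comp_eq_pexp (hp0 : ∀ ω, 0 ≤ p ω) (hpos : 0 < Pr p B → 0 < Pr p C)
    (hind : ∀ u, Pr p (fun ω => C ω ∧ U ω = u) * Pr p B = Pr p C * Pr p (fun ω => B ω ∧ U ω = u)) :
    Pr p B * cexp p (fun ω => g (U ω)) C = pexp p (fun ω => g (U ω)) B := by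
  rcases (Pr_nonneg hp0 B).eq_or_lt with hB | hB
  · rw [← hB, zero_mul, pexp_eq_zero_of_Pr_eq_zero hp0 _ hB.symm]
  · rw [cexp_eq_pexp_div, mul_div_assoc', div_eq_iff (hpos hB).ne']
    exact (Pr_mul_pexp_comp_comm U g hind).symm.trans (mul_comm _ _)

end Independence

section Instrument

variable {Ω 𝕏 β : Type*} [Fintype Ω] [Fintype 𝕏] {p : Ω → ℝ} (X : Ω → 𝕏) (Z : Ω → ℝ) (U : Ω → β)

theorem sum_Pr_mul_cexp_sub_cexp_eq_Ex (hp0 : ∀ ω, 0 ≤ p ω)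
    (hign : ∀ (x : 𝕏) (z : ℝ) (u : β),
      Pr p (fun ω => Z ω = z ∧ U ω = u ∧ X ω = x) * Pr p (fun ω => X ω = x)
        = Pr p (fun ω => Z ω = z ∧ X ω = x) * Pr p (fun ω => U ω = u ∧ X ω = x))
    (hpos : ∀ (x : 𝕏) (z : ℝ), (z = 0 ∨ z = 1) → Pr p (fun ω => X ω = x) > 0 →
      Pr p (fun ω => Z ω = z ∧ X ω = x) > 0)
    {W : Ω → ℝ} (g₁ g₀ : β → ℝ) (hW₁ : ∀ ω, Z ω = 1 → W ω = g₁ (U ω))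
    (hW₀ : ∀ ω, Z ω = 0 → W ω = g₀ (U ω)) :
    ∑ x, Pr p (fun ω => X ω = x) *
        (cexp p W (fun ω => X ω = x ∧ Z ω = 1) - cexp p W (fun ω => X ω = x ∧ Z ω = 0))
      = Ex p (fun ω => g₁ (U ω) - g₀ (U ω)) := by
  have arm : ∀ (x : 𝕏) (z : ℝ) (g : β → ℝ), (z = 0 ∨ z = 1) → (∀ ω, Z ω = z → W ω = g (U ω)) →
      Pr p (fun ω => X ω = x) * cexp p W (fun ω => X ω = x ∧ Z ω = z)
        = pexp p (fun ω => g (U ω)) (fun ω => X ω = x) := by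
    intro x z g hz hW
    have hWg : cexp p W (fun ω => X ω = x ∧ Z ω = z)
        = cexp p (fun ω => g (U ω)) (fun ω => X ω = x ∧ Z ω = z) := by
      rw [cexp_eq_pexp_div, cexp_eq_pexp_div, pexp_congr p (fun _ => Iff.rfl) fun ω h => hW ω h.2]
    rw [hWg]
    refine mul_cexp_comp_eq_pexp U g hp0 (fun hx => ?_) fun u => ?_
    · exact (Pr_congr p fun ω => and_comm).trans_gt (hpos x z hz hx)
    · convert hign x z u using 2 <;> exact Pr_congr p fun ω => by tauto
  rw [← sum_pexp_fiber p _ X]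
  refine sum_congr rfl fun x _ => ?_
  rw [mul_sub, arm x 1 g₁ (Or.inr rfl) hW₁, arm x 0 g₀ (Or.inl rfl) hW₀, pexp_sub]

end Instrument

theorem sub_eq_ite_lt_of_le {a₀ a₁ : ℝ} (h₀ : a₀ = 0 ∨ a₀ = 1) (h₁ : a₁ = 0 ∨ a₁ = 1)
    (hle : a₀ ≤ a₁) : a₁ - a₀ = if a₀ < a₁ then 1 else 0 := by
  rcases h₀ with rfl | rfl <;> rcases h₁ with rfl | rfl <;> norm_num at *

theorem ite_sub_ite_eq_ite_lt_of_le {a₀ a₁ : ℝ} (h₀ : a₀ = 0 ∨ a₀ = 1) (h₁ : a₁ = 0 ∨ a₁ = 1)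
    (hle : a₀ ≤ a₁) (y₀ y₁ : ℝ) :
    (if a₁ = 1 then y₁ else y₀) - (if a₀ = 1 then y₁ else y₀) = if a₀ < a₁ then y₁ - y₀ else 0 := by
  rcases h₀ with rfl | rfl <;> rcases h₁ with rfl | rfl <;> norm_num at *

theorem late_identification_general {Ω 𝕏 : Type*} [Fintype Ω] [Fintype 𝕏]
    (p : Ω → ℝ) (hp0 : ∀ ω, 0 ≤ p ω) (hp1 : ∑ ω, p ω = 1)
    (X : Ω → 𝕏) (Z A Y A0 A1 Y0 Y1 : Ω → ℝ)
    (hA0bin : ∀ ω, A0 ω = 0 ∨ A0 ω = 1) (hA1bin : ∀ ω, A1 ω = 0 ∨ A1 ω = 1)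
    -- (A1) consistency: A = A^Z and Y = Y^A (with (A3) exclusion restriction built in:
    -- the potential outcomes Y^a depend on the instrument only through the treatment)
    (hconsA : ∀ ω, A ω = if Z ω = 1 then A1 ω else A0 ω)
    (hconsY : ∀ ω, Y ω = if A ω = 1 then Y1 ω else Y0 ω)
    -- (A2) ignorability: Z ⟂ (Y^0, Y^1, A^0, A^1) | X
    (hign : ∀ (x : 𝕏) (z a0 a1 y0 y1 : ℝ),
      Pr p (fun ω => Z ω = z ∧ A0 ω = a0 ∧ A1 ω = a1 ∧ Y0 ω = y0 ∧ Y1 ω = y1 ∧ X ω = x) *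
          Pr p (fun ω => X ω = x)
        = Pr p (fun ω => Z ω = z ∧ X ω = x) *
            Pr p (fun ω => A0 ω = a0 ∧ A1 ω = a1 ∧ Y0 ω = y0 ∧ Y1 ω = y1 ∧ X ω = x))
    -- (A5) positivity
    (hpos : ∀ (x : 𝕏) (z : ℝ), (z = 0 ∨ z = 1) → Pr p (fun ω => X ω = x) > 0 →
      Pr p (fun ω => Z ω = z ∧ X ω = x) > 0)
    -- (A6) monotonicity
    (hmono : Pr p (fun ω => A0 ω ≤ A1 ω) = 1) :
    cexp p (fun ω => Y1 ω - Y0 ω) (fun ω => A0 ω < A1 ω)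
      = (∑ x : 𝕏, Pr p (fun ω => X ω = x) *
            (cexp p Y (fun ω => X ω = x ∧ Z ω = 1) - cexp p Y (fun ω => X ω = x ∧ Z ω = 0)))
        / (∑ x : 𝕏, Pr p (fun ω => X ω = x) *
            (cexp p A (fun ω => X ω = x ∧ Z ω = 1) - cexp p A (fun ω => X ω = x ∧ Z ω = 0))) := by
  let U : Ω → ℝ × ℝ × ℝ × ℝ := fun ω => (A0 ω, A1 ω, Y0 ω, Y1 ω)
  have hignU : ∀ (x : 𝕏) (z : ℝ) (u : ℝ × ℝ × ℝ × ℝ),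
      Pr p (fun ω => Z ω = z ∧ U ω = u ∧ X ω = x) * Pr p (fun ω => X ω = x)
        = Pr p (fun ω => Z ω = z ∧ X ω = x) * Pr p (fun ω => U ω = u ∧ X ω = x) :=
    fun x z ⟨a0, a1, y0, y1⟩ => by
      simpa only [U, Prod.ext_iff, and_assoc] using hign x z a0 a1 y0 y1
  have hA₁ : ∀ ω, Z ω = 1 → A ω = A1 ω := fun ω hz => by rw [hconsA ω, if_pos hz]
  have hA₀ : ∀ ω, Z ω = 0 → A ω = A0 ω := fun ω hz => by rw [hconsA ω, if_neg (by norm_num [hz])]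
  have hmono_ae : ∀ ω, p ω ≠ 0 → A0 ω ≤ A1 ω := fun ω => ae_of_Pr_eq_one hp0 hp1 hmono
  have hnum := sum_Pr_mul_cexp_sub_cexp_eq_Ex X Z U hp0 hignU hpos (W := Y)
    (fun ⟨_, a1, y0, y1⟩ => if a1 = 1 then y1 else y0)
    (fun ⟨a0, _, y0, y1⟩ => if a0 = 1 then y1 else y0)
    (fun ω hz => by rw [hconsY ω, hA₁ ω hz]) (fun ω hz => by rw [hconsY ω, hA₀ ω hz])
  have hden := sum_Pr_mul_cexp_sub_cexp_eq_Ex X Z U hp0 hignU hpos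
    (fun ⟨_, a1, _, _⟩ => a1) (fun ⟨a0, _, _, _⟩ => a0) hA₁ hA₀
  rw [hnum, hden, Ex_eq_pexp_of_ae p (A := fun ω => A0 ω < A1 ω) (g := fun _ => 1) fun ω hω =>
      sub_eq_ite_lt_of_le (hA0bin ω) (hA1bin ω) (hmono_ae ω hω),
    Ex_eq_pexp_of_ae p fun ω hω =>
      ite_sub_ite_eq_ite_lt_of_le (hA0bin ω) (hA1bin ω) (hmono_ae ω hω) (Y0 ω) (Y1 ω),
    pexp_one]
  rfl

/-- identification of the local average treatment effect (Lemma 1). -/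
theorem late_identification {Ω 𝕏 : Type*} [Fintype Ω] [Fintype 𝕏]
    (p : Ω → ℝ) (hp0 : ∀ ω, 0 ≤ p ω) (hp1 : ∑ ω, p ω = 1)
    (X : Ω → 𝕏) (Z A Y A0 A1 Y0 Y1 : Ω → ℝ)
    (hZbin : ∀ ω, Z ω = 0 ∨ Z ω = 1)
    (hA0bin : ∀ ω, A0 ω = 0 ∨ A0 ω = 1) (hA1bin : ∀ ω, A1 ω = 0 ∨ A1 ω = 1)
    (hY0bin : ∀ ω, Y0 ω = 0 ∨ Y0 ω = 1) (hY1bin : ∀ ω, Y1 ω = 0 ∨ Y1 ω = 1)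
    -- (A1) consistency: A = A^Z and Y = Y^A (with (A3) exclusion restriction built in:
    -- the potential outcomes Y^a depend on the instrument only through the treatment)
    (hconsA : ∀ ω, A ω = if Z ω = 1 then A1 ω else A0 ω)
    (hconsY : ∀ ω, Y ω = if A ω = 1 then Y1 ω else Y0 ω)
    -- (A2) ignorability: Z ⟂ (Y^0, Y^1, A^0, A^1) | X
    (hign : ∀ (x : 𝕏) (z a0 a1 y0 y1 : ℝ),
      Pr p (fun ω => Z ω = z ∧ A0 ω = a0 ∧ A1 ω = a1 ∧ Y0 ω = y0 ∧ Y1 ω = y1 ∧ X ω = x) *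
          Pr p (fun ω => X ω = x)
        = Pr p (fun ω => Z ω = z ∧ X ω = x) *
            Pr p (fun ω => A0 ω = a0 ∧ A1 ω = a1 ∧ Y0 ω = y0 ∧ Y1 ω = y1 ∧ X ω = x))
    -- (A5) positivity
    (hpos : ∀ (x : 𝕏) (z : ℝ), (z = 0 ∨ z = 1) → Pr p (fun ω => X ω = x) > 0 →
      Pr p (fun ω => Z ω = z ∧ X ω = x) > 0)
    -- (A6) monotonicity
    (hmono : Pr p (fun ω => A0 ω ≤ A1 ω) = 1)
    -- existence of compliers
    (hcompl : Pr p (fun ω => A0 ω < A1 ω) > 0)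
    -- the denominator is nonzero
    (hden : (∑ x : 𝕏, Pr p (fun ω => X ω = x) *
        (cexp p A (fun ω => X ω = x ∧ Z ω = 1) - cexp p A (fun ω => X ω = x ∧ Z ω = 0))) ≠ 0) :
    cexp p (fun ω => Y1 ω - Y0 ω) (fun ω => A0 ω < A1 ω)
      = (∑ x : 𝕏, Pr p (fun ω => X ω = x) *
            (cexp p Y (fun ω => X ω = x ∧ Z ω = 1) - cexp p Y (fun ω => X ω = x ∧ Z ω = 0)))
        / (∑ x : 𝕏, Pr p (fun ω => X ω = x) *
            (cexp p A (fun ω => X ω = x ∧ Z ω = 1) - cexp p A (fun ω => X ω = x ∧ Z ω = 0))) :=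
  late_identification_general p hp0 hp1 X Z A Y A0 A1 Y0 Y1 hA0bin hA1bin hconsA hconsY hign hpos
    hmono
end

section
/- For arbitrary functions π̂, δ̂ with δ̂ > 0, E[ π̂ + (1(Z=1)/δ̂)(A − π̂) ] − E[π] = E[ ((δ − δ̂)/δ̂)(π − π̂) ], where π(X) = E(A | X, Z=1) and δ(X) = P(Z=1 | X) > 0. -/
open Finset
open scoped Classical

/-! The tower property turns `E[1(Z=1) g(X) A]` into `E[g(X) δ(X) π(X)]` and `E[1(Z=1) g(X)]`
into `E[g(X) δ(X)]`; after that the identity is pointwise algebra in `X`: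
`π̂ + δ (π - π̂) / δ̂ - π = (δ - δ̂) (π - π̂) / δ̂`.
Where a conditioning event is null, `cexp` is `0` by the convention `x / 0 = 0`; nonnegativity of
`p` makes the corresponding partial sums vanish as well. -/

section

variable {Ω : Type*} [Fintype Ω] (p : Ω → ℝ)

theorem Ex_sub (f g : Ω → ℝ) : Ex p (fun ω => f ω - g ω) = Ex p f - Ex p g := by
  simp only [Ex, mul_sub, sum_sub_distrib]

variable {p}

theorem sum_ite_mul_eq_zero_of_Pr_eq_zero (hp0 : ∀ ω, 0 ≤ p ω) {E : Ω → Prop}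
    (hE : Pr p E = 0) (f : Ω → ℝ) : (∑ ω, if E ω then p ω * f ω else 0) = 0 := by
  have hp : ∀ ω, E ω → p ω = 0 := fun ω hω => by
    simpa [hω] using
      (sum_eq_zero_iff_of_nonneg fun ω _ => ite_nonneg (hp0 ω) le_rfl).mp hE ω (mem_univ ω)
  exact sum_eq_zero fun ω _ => by split_ifs with hω <;> simp [hp ω, hω]

theorem cexp_mul_Pr (hp0 : ∀ ω, 0 ≤ p ω) (f : Ω → ℝ) (E : Ω → Prop) :
    cexp p f E * Pr p E = ∑ ω, if E ω then p ω * f ω else 0 := by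
  by_cases hE : Pr p E = 0
  · rw [hE, mul_zero, sum_ite_mul_eq_zero_of_Pr_eq_zero hp0 hE]
  · exact div_mul_cancel₀ _ hE

theorem cexp_indicator (E F : Ω → Prop) :
    cexp p (fun ω => if E ω then 1 else 0) F = Pr p (fun ω => E ω ∧ F ω) / Pr p F := by
  rw [cexp]
  congr 1
  exact sum_congr rfl fun ω _ => by by_cases hE : E ω <;> by_cases hF : F ω <;> simp [hE, hF]

theorem cexp_indicator_mul (hp0 : ∀ ω, 0 ≤ p ω) (E F : Ω → Prop) (f : Ω → ℝ) :
    cexp p (fun ω => (if E ω then 1 else 0) * f ω) F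
      = Pr p (fun ω => E ω ∧ F ω) / Pr p F * cexp p f (fun ω => F ω ∧ E ω) := by
  have hcomm : Pr p (fun ω => E ω ∧ F ω) = Pr p (fun ω => F ω ∧ E ω) := by
    congr 1
    funext ω
    exact propext and_comm
  rw [hcomm, div_mul_eq_mul_div, mul_comm _ (cexp p f _), cexp_mul_Pr hp0, cexp]
  congr 1
  exact sum_congr rfl fun ω _ => by by_cases hE : E ω <;> by_cases hF : F ω <;> simp [hE, hF]

theorem Ex_comp_mul_sub_cexp_eq_zero (hp0 : ∀ ω, 0 ≤ p ω) {𝕏 : Type*} [Fintype 𝕏]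
    (X : Ω → 𝕏) (g : 𝕏 → ℝ) (f : Ω → ℝ) :
    Ex p (fun ω => g (X ω) * (f ω - cexp p f (fun ω' => X ω' = X ω))) = 0 := by
  rw [Ex, ← sum_fiberwise univ X]
  refine sum_eq_zero fun x _ => ?_
  have hfiber : ∀ h : Ω → ℝ, (∑ ω ∈ univ with X ω = x, p ω * h ω)
      = ∑ ω, if X ω = x then p ω * h ω else 0 := fun h => sum_filter _ _
  calc (∑ ω ∈ univ with X ω = x, p ω * (g (X ω) * (f ω - cexp p f (fun ω' => X ω' = X ω))))
      = ∑ ω ∈ univ with X ω = x, p ω * (g x * (f ω - cexp p f (fun ω' => X ω' = x))) :=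
        sum_congr rfl fun ω hω => by rw [(mem_filter.mp hω).2]
    _ = g x * ((∑ ω ∈ univ with X ω = x, p ω * f ω)
          - cexp p f (fun ω' => X ω' = x) * ∑ ω ∈ univ with X ω = x, p ω * 1) := by
        simp only [mul_sub, mul_sum, ← sum_sub_distrib]
        exact sum_congr rfl fun ω _ => by ring
    _ = 0 := by
        rw [hfiber, hfiber, ← cexp_mul_Pr hp0]
        simp only [Pr, mul_one, sub_self, mul_zero]

end

theorem doubly_robust_bias_treatment_general {Ω 𝕏 : Type*} [Fintype Ω] [Fintype 𝕏]
    (p : Ω → ℝ) (hp0 : ∀ ω, 0 ≤ p ω)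
    (X : Ω → 𝕏) (Z A : Ω → ℝ)
    (πh δh : 𝕏 → ℝ) (hδh : ∀ x, 0 < δh x) :
    let δ : 𝕏 → ℝ := fun x =>
      Pr p (fun ω => Z ω = 1 ∧ X ω = x) / Pr p (fun ω => X ω = x)
    let π : 𝕏 → ℝ := fun x => cexp p A (fun ω => X ω = x ∧ Z ω = 1)
    Ex p (fun ω => πh (X ω) + (if Z ω = 1 then 1 else 0) / δh (X ω) * (A ω - πh (X ω)))
      - Ex p (fun ω => π (X ω))
    = Ex p (fun ω => (δ (X ω) - δh (X ω)) / δh (X ω) * (π (X ω) - πh (X ω))) := by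
  intro δ π
  have hδ (x : 𝕏) : cexp p (fun ω => if Z ω = 1 then 1 else 0) (fun ω => X ω = x) = δ x :=
    cexp_indicator _ _
  have hδπ (x : 𝕏) :
      cexp p (fun ω => (if Z ω = 1 then 1 else 0) * A ω) (fun ω => X ω = x) = δ x * π x :=
    cexp_indicator_mul hp0 _ _ _
  have horthA := Ex_comp_mul_sub_cexp_eq_zero hp0 X (fun x => 1 / δh x)
    (fun ω => (if Z ω = 1 then 1 else 0) * A ω)
  have horthZ := Ex_comp_mul_sub_cexp_eq_zero hp0 X (fun x => πh x / δh x)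
    (fun ω => if Z ω = 1 then 1 else 0)
  simp only [hδ, hδπ] at horthA horthZ
  have hresidual := congrArg₂ (· - ·) horthA horthZ
  rw [← Ex_sub, sub_zero] at hresidual
  rw [← sub_eq_zero, ← Ex_sub, ← Ex_sub]
  convert hresidual using 2
  funext ω
  have := (hδh (X ω)).ne'
  field_simp
  ring

/-- doubly robust bias identity for the treatment-propensity functional. -/
theorem doubly_robust_bias_treatment {Ω 𝕏 : Type*} [Fintype Ω] [Fintype 𝕏]
    (p : Ω → ℝ) (hp0 : ∀ ω, 0 ≤ p ω) (hp1 : ∑ ω, p ω = 1)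
    (X : Ω → 𝕏) (Z A : Ω → ℝ)
    (hZbin : ∀ ω, Z ω = 0 ∨ Z ω = 1) (hAbin : ∀ ω, A ω = 0 ∨ A ω = 1)
    (πh δh : 𝕏 → ℝ) (hδh : ∀ x, 0 < δh x)
    (hpos : ∀ x : 𝕏, Pr p (fun ω => X ω = x) > 0 →
      Pr p (fun ω => Z ω = 1 ∧ X ω = x) > 0) :
    let δ : 𝕏 → ℝ := fun x =>
      Pr p (fun ω => Z ω = 1 ∧ X ω = x) / Pr p (fun ω => X ω = x)
    let π : 𝕏 → ℝ := fun x => cexp p A (fun ω => X ω = x ∧ Z ω = 1)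
    Ex p (fun ω => πh (X ω) + (if Z ω = 1 then 1 else 0) / δh (X ω) * (A ω - πh (X ω)))
      - Ex p (fun ω => π (X ω))
    = Ex p (fun ω => (δ (X ω) - δh (X ω)) / δh (X ω) * (π (X ω) - πh (X ω))) :=
  doubly_robust_bias_treatment_general p hp0 X Z A πh δh hδh
end
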